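/- arXiv:0901.3565 — 3 statements merged into one kernel-verified Lean document; each statement's English description precedes it below -/
import Mathlib

section
/- Fix an integer ℓ > 2. If λ is an (ℓ,0)-JM partition, then for every residue i with 0 ≤ i < ℓ, the ladder i-signature of λ equals its reduced ladder i-signature; that is, the ladder i-signature already has the form +⋯+−⋯− (every + precedes every − in the ladder reading order), so no −+ cancellation occurs. -/
noncomputable section

/-!
Common combinatorial definitions: partitions (English notation, rows indexed from 1),
Young diagrams, hooks, rim hooks, ladders, residues, crystal operators (classical and
ladder versions), locked boxes, regularization classes, dominance order.
-/

structure YPartition where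
  part : ℕ → ℕ
  zero_at_zero : part 0 = 0
  antitone : ∀ i j : ℕ, 1 ≤ i → i ≤ j → part j ≤ part i
  eventually_zero : ∃ N : ℕ, ∀ i : ℕ, N ≤ i → part i = 0

namespace YPartition

/-- The set of boxes of the Young diagram of `μ` (row, column), both indices ≥ 1. -/
def cells (μ : YPartition) : Set (ℕ × ℕ) :=
  {p | 1 ≤ p.1 ∧ 1 ≤ p.2 ∧ p.2 ≤ μ.part p.1}

/-- The length of column `b`: the number of rows containing a box in column `b`. -/
def colLen (μ : YPartition) (b : ℕ) : ℕ :=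
  Nat.card {a : ℕ | 1 ≤ a ∧ b ≤ μ.part a}

/-- The arm of box `(a,b)`: boxes strictly to its right in its row. -/
def arm (μ : YPartition) (a b : ℕ) : ℕ := μ.part a - b

/-- The leg of box `(a,b)`: boxes strictly below it in its column. -/
def leg (μ : YPartition) (a b : ℕ) : ℕ := μ.colLen b - a

/-- The hook length of the box `(a,b)`: arm + leg + 1. -/
def hook (μ : YPartition) (a b : ℕ) : ℕ := (μ.part a - b) + (μ.colLen b - a) + 1

/-- The number of boxes of `μ`. -/
def size (μ : YPartition) : ℕ := μ.cells.ncard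

/-- The number of (nonzero) parts of `μ`. -/
def length (μ : YPartition) : ℕ := μ.colLen 1

/-- `μ` is an `(ℓ,0)`-JM partition: there are no boxes `(a,b)`, `(a,y)`, `(x,b)` with
`ℓ ∣ hook (a,b)` while `ℓ` divides neither `hook (a,y)` nor `hook (x,b)`. -/
def IsJM (ℓ : ℕ) (μ : YPartition) : Prop :=
  ¬ ∃ a b y x : ℕ, (a, b) ∈ μ.cells ∧ (a, y) ∈ μ.cells ∧ (x, b) ∈ μ.cells ∧
    ℓ ∣ μ.hook a b ∧ ¬ ℓ ∣ μ.hook a y ∧ ¬ ℓ ∣ μ.hook x b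

/-- Two boxes share an edge. -/
def BoxAdjacent (p q : ℕ × ℕ) : Prop :=
  (p.1 = q.1 ∧ (p.2 + 1 = q.2 ∨ q.2 + 1 = p.2)) ∨
  (p.2 = q.2 ∧ (p.1 + 1 = q.1 ∨ q.1 + 1 = p.1))

/-- A set of boxes is connected (via shared edges, inside the set). -/
def SetConnected (S : Set (ℕ × ℕ)) : Prop :=
  ∀ p ∈ S, ∀ q ∈ S,
    Relation.ReflTransGen (fun x y => x ∈ S ∧ y ∈ S ∧ BoxAdjacent x y) p q

/-- `S` contains no 2 × 2 square of boxes. -/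
def HasNoSquare (S : Set (ℕ × ℕ)) : Prop :=
  ¬ ∃ a b : ℕ, (a, b) ∈ S ∧ (a + 1, b) ∈ S ∧ (a, b + 1) ∈ S ∧ (a + 1, b + 1) ∈ S

/-- `S` is a removable `ℓ`-rim hook of `μ`: a connected set of `ℓ` boxes of `μ` with no
2 × 2 square whose removal leaves the Young diagram of a partition. -/
def IsRimHook (ℓ : ℕ) (μ : YPartition) (S : Set (ℕ × ℕ)) : Prop :=
  S ⊆ μ.cells ∧ S.ncard = ℓ ∧ SetConnected S ∧ HasNoSquare S ∧
    ∃ ν : YPartition, ν.cells = μ.cells \ S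

/-- `S` is contained in a single row. -/
def HorizontalHook (S : Set (ℕ × ℕ)) : Prop := ∃ a : ℕ, ∀ p ∈ S, p.1 = a

/-- `S` is contained in a single column. -/
def VerticalHook (S : Set (ℕ × ℕ)) : Prop := ∃ b : ℕ, ∀ p ∈ S, p.2 = b

/-- Two sets of boxes are adjacent when some box of one shares an edge with a box of the other. -/
def SetsAdjacent (R S : Set (ℕ × ℕ)) : Prop := ∃ p ∈ R, ∃ q ∈ S, BoxAdjacent p q

/-- An `ℓ`-core: a partition with no removable `ℓ`-rim hook. -/
def IsCore (ℓ : ℕ) (μ : YPartition) : Prop := ¬ ∃ S : Set (ℕ × ℕ), IsRimHook ℓ μ S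

/-- `p` and `q` lie on the same ladder: going down one column step the row increases
by `ℓ - 1`. -/
def SameLadder (ℓ : ℕ) (p q : ℕ × ℕ) : Prop :=
  (q.1 : ℤ) - (p.1 : ℤ) = ((ℓ : ℤ) - 1) * ((p.2 : ℤ) - (q.2 : ℤ))

/-- The index of the ladder through `p`: the ladder through `(k,1)` has index `k`. -/
def ladderIdx (ℓ : ℕ) (p : ℕ × ℕ) : ℕ := p.1 + (ℓ - 1) * (p.2 - 1)

/-- The residue of position `(a,b)` is `b - a` mod `ℓ`. -/
def res (ℓ : ℕ) (p : ℕ × ℕ) : ℕ := (((p.2 : ℤ) - (p.1 : ℤ)) % (ℓ : ℤ)).toNat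

/-- `p` is a removable box of `μ`. -/
def Removable (μ : YPartition) (p : ℕ × ℕ) : Prop :=
  1 ≤ p.1 ∧ p.2 = μ.part p.1 ∧ μ.part (p.1 + 1) < p.2

/-- `p` is an addable box of `μ`. -/
def Addable (μ : YPartition) (p : ℕ × ℕ) : Prop :=
  1 ≤ p.1 ∧ p.2 = μ.part p.1 + 1 ∧ (p.1 = 1 ∨ p.2 ≤ μ.part (p.1 - 1))

/-- The removable `i`-boxes of `μ`. -/
def RemovableRes (ℓ i : ℕ) (μ : YPartition) : Set (ℕ × ℕ) :=
  {p | Removable μ p ∧ res ℓ p = i}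

/-- The addable `i`-boxes of `μ`. -/
def AddableRes (ℓ i : ℕ) (μ : YPartition) : Set (ℕ × ℕ) :=
  {p | Addable μ p ∧ res ℓ p = i}

/-- Ladder reading order (reflexive): ladders left to right, top to bottom within a ladder.
`LadderLE ℓ p q` means `p` is read before (or equal to) `q`. -/
def LadderLE (ℓ : ℕ) (p q : ℕ × ℕ) : Prop :=
  ladderIdx ℓ p < ladderIdx ℓ q ∨ (ladderIdx ℓ p = ladderIdx ℓ q ∧ p.1 ≤ q.1)

/-- Strict ladder reading order. -/
def LadderLT (ℓ : ℕ) (p q : ℕ × ℕ) : Prop :=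
  ladderIdx ℓ p < ladderIdx ℓ q ∨ (ladderIdx ℓ p = ladderIdx ℓ q ∧ p.1 < q.1)

/-- Classical reading order (reflexive): rows from bottom to top.
`RowLE p q` means `p` is read before (or equal to) `q`. -/
def RowLE (p q : ℕ × ℕ) : Prop := q.1 ≤ p.1

/-- Given a reading order `le`, a set `Rem` of `-` marks and `Add` of `+` marks, a `-` at `p`
survives the cancellation of adjacent `-+` pairs iff every interval of the reading word
starting at `p` contains strictly more `-`'s than `+`'s. -/
def NormalIn (le : ℕ × ℕ → ℕ × ℕ → Prop) (Rem Add : Set (ℕ × ℕ)) (p : ℕ × ℕ) : Prop :=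
  p ∈ Rem ∧ ∀ q ∈ Rem ∪ Add, le p q →
    (Add ∩ {s | le p s ∧ le s q}).ncard < (Rem ∩ {s | le p s ∧ le s q}).ncard

/-- A `+` at `q` survives the cancellation of adjacent `-+` pairs iff every interval of the
reading word ending at `q` contains strictly more `+`'s than `-`'s. -/
def ConormalIn (le : ℕ × ℕ → ℕ × ℕ → Prop) (Rem Add : Set (ℕ × ℕ)) (q : ℕ × ℕ) : Prop :=
  q ∈ Add ∧ ∀ p ∈ Rem ∪ Add, le p q →
    (Rem ∩ {s | le p s ∧ le s q}).ncard < (Add ∩ {s | le p s ∧ le s q}).ncard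

/-- Ladder normal `i`-box. -/
def LadderNormal (ℓ i : ℕ) (μ : YPartition) (p : ℕ × ℕ) : Prop :=
  NormalIn (LadderLE ℓ) (RemovableRes ℓ i μ) (AddableRes ℓ i μ) p

/-- Ladder conormal `i`-box. -/
def LadderConormal (ℓ i : ℕ) (μ : YPartition) (p : ℕ × ℕ) : Prop :=
  ConormalIn (LadderLE ℓ) (RemovableRes ℓ i μ) (AddableRes ℓ i μ) p

/-- Normal `i`-box (classical signature). -/
def ClassNormal (ℓ i : ℕ) (μ : YPartition) (p : ℕ × ℕ) : Prop :=
  NormalIn RowLE (RemovableRes ℓ i μ) (AddableRes ℓ i μ) p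

/-- Conormal `i`-box (classical signature). -/
def ClassConormal (ℓ i : ℕ) (μ : YPartition) (p : ℕ × ℕ) : Prop :=
  ConormalIn RowLE (RemovableRes ℓ i μ) (AddableRes ℓ i μ) p

/-- `ε̂_i(μ)`: number of ladder normal `i`-boxes. -/
def hatEps (ℓ i : ℕ) (μ : YPartition) : ℕ := {p | LadderNormal ℓ i μ p}.ncard

/-- `φ̂_i(μ)`: number of ladder conormal `i`-boxes. -/
def hatPhi (ℓ i : ℕ) (μ : YPartition) : ℕ := {p | LadderConormal ℓ i μ p}.ncard

/-- `ε_i(μ)`: number of normal `i`-boxes. -/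
def eps (ℓ i : ℕ) (μ : YPartition) : ℕ := {p | ClassNormal ℓ i μ p}.ncard

/-- `φ_i(μ)`: number of conormal `i`-boxes. -/
def phi (ℓ i : ℕ) (μ : YPartition) : ℕ := {p | ClassConormal ℓ i μ p}.ncard

/-- The ladder good `i`-box: the leftmost `-` of the reduced ladder `i`-signature. -/
def LadderGood (ℓ i : ℕ) (μ : YPartition) (p : ℕ × ℕ) : Prop :=
  LadderNormal ℓ i μ p ∧ ∀ q, LadderNormal ℓ i μ q → LadderLE ℓ p q

/-- The ladder cogood `i`-box: the rightmost `+` of the reduced ladder `i`-signature. -/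
def LadderCogood (ℓ i : ℕ) (μ : YPartition) (p : ℕ × ℕ) : Prop :=
  LadderConormal ℓ i μ p ∧ ∀ q, LadderConormal ℓ i μ q → LadderLE ℓ q p

/-- The good `i`-box (classical). -/
def ClassGood (ℓ i : ℕ) (μ : YPartition) (p : ℕ × ℕ) : Prop :=
  ClassNormal ℓ i μ p ∧ ∀ q, ClassNormal ℓ i μ q → RowLE p q

/-- The cogood `i`-box (classical). -/
def ClassCogood (ℓ i : ℕ) (μ : YPartition) (p : ℕ × ℕ) : Prop :=
  ClassConormal ℓ i μ p ∧ ∀ q, ClassConormal ℓ i μ q → RowLE q p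

/-- The ladder crystal operator `f̂_i` as a relation: `mu = f̂_i lam ≠ 0`. -/
def HatF (ℓ i : ℕ) (lam mu : YPartition) : Prop :=
  ∃ p, LadderCogood ℓ i lam p ∧ mu.cells = insert p lam.cells

/-- The ladder crystal operator `ê_i` as a relation: `mu = ê_i lam ≠ 0`. -/
def HatE (ℓ i : ℕ) (lam mu : YPartition) : Prop :=
  ∃ p, LadderGood ℓ i lam p ∧ mu.cells = lam.cells \ {p}

/-- The classical crystal operator `f̃_i` as a relation: `mu = f̃_i lam ≠ 0`. -/
def TildeF (ℓ i : ℕ) (lam mu : YPartition) : Prop :=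
  ∃ p, ClassCogood ℓ i lam p ∧ mu.cells = insert p lam.cells

/-- The classical crystal operator `ẽ_i` as a relation: `mu = ẽ_i lam ≠ 0`. -/
def TildeE (ℓ i : ℕ) (lam mu : YPartition) : Prop :=
  ∃ p, ClassGood ℓ i lam p ∧ mu.cells = lam.cells \ {p}

/-- `n`-fold composition of a relation. -/
def RelIter {α : Type} (r : α → α → Prop) : ℕ → α → α → Prop
  | 0 => fun a b => a = b
  | n + 1 => fun a b => ∃ c, r a c ∧ RelIter r n c b

/-- The empty partition. -/
def emptyP : YPartition where
  part := fun _ => 0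
  zero_at_zero := rfl
  antitone := fun _ _ _ _ => le_rfl
  eventually_zero := ⟨0, fun _ _ => rfl⟩

/-- `μ` is a node of the ladder crystal `B(Λ₀)^L`: it is obtained from the empty
partition by finitely many applications of the operators `f̂_i`, `0 ≤ i < ℓ`. -/
def LadderNode (ℓ : ℕ) (μ : YPartition) : Prop :=
  Relation.ReflTransGen (fun a b => ∃ i : ℕ, i < ℓ ∧ HatF ℓ i a b) emptyP μ

/-- The type I locking condition at `(a,b)`: every unoccupied position on the ladder of
`(a,b)` lying below it has an unoccupied position directly above it. -/
def LadderClear (ℓ : ℕ) (μ : YPartition) (a b : ℕ) : Prop :=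
  ∀ c d : ℕ, 1 ≤ c → 1 ≤ d → SameLadder ℓ (a, b) (c, d) → a < c →
    (c, d) ∉ μ.cells → (c - 1, d) ∉ μ.cells

/-- Locked boxes of `μ`. -/
inductive Locked (ℓ : ℕ) (μ : YPartition) : ℕ × ℕ → Prop where
  | typeI_top : ∀ b : ℕ, (1, b) ∈ μ.cells → LadderClear ℓ μ 1 b → Locked ℓ μ (1, b)
  | typeI_up : ∀ a b : ℕ, (a + 1, b) ∈ μ.cells → Locked ℓ μ (a, b) →
      LadderClear ℓ μ (a + 1) b → Locked ℓ μ (a + 1, b)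
  | typeII : ∀ a b b' : ℕ, (a, b) ∈ μ.cells → b < b' → Locked ℓ μ (a, b') → Locked ℓ μ (a, b)

/-- Number of boxes of `μ` on the `k`-th ladder. -/
def ladderCount (ℓ : ℕ) (μ : YPartition) (k : ℕ) : ℕ :=
  (μ.cells ∩ {p | ladderIdx ℓ p = k}).ncard

/-- `lam` and `mu` lie in the same regularization class: they have the same number of
boxes on every ladder. -/
def SameRegClass (ℓ : ℕ) (lam mu : YPartition) : Prop :=
  ∀ k : ℕ, ladderCount ℓ lam k = ladderCount ℓ mu k

/-- The boxes of `μ` are top-justified on each ladder. -/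
def TopJustified (ℓ : ℕ) (μ : YPartition) : Prop :=
  ∀ p ∈ μ.cells, ∀ q : ℕ × ℕ, 1 ≤ q.1 → 1 ≤ q.2 →
    ladderIdx ℓ q = ladderIdx ℓ p → q.1 < p.1 → q ∈ μ.cells

/-- `mu = R lam`: the regularization of `lam`, obtained by moving every box of `lam` to
the topmost unoccupied positions of its ladder. -/
def IsRegularization (ℓ : ℕ) (lam mu : YPartition) : Prop :=
  SameRegClass ℓ lam mu ∧ TopJustified ℓ mu

/-- Dominance order on partitions. -/
def DomLE (lam mu : YPartition) : Prop :=
  ∀ j : ℕ, ∑ i ∈ Finset.Icc 1 j, lam.part i ≤ ∑ i ∈ Finset.Icc 1 j, mu.part i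

/-- All (positive) positions on the `k`-th ladder. -/
def LadderPositions (ℓ k : ℕ) : Set (ℕ × ℕ) :=
  {p | 1 ≤ p.1 ∧ 1 ≤ p.2 ∧ ladderIdx ℓ p = k}

/-- The set of locked boxes of `μ`. -/
def lockedCells (ℓ : ℕ) (μ : YPartition) : Set (ℕ × ℕ) := {p | Locked ℓ μ p}

/-- The number of unlocked boxes of `μ` on the `k`-th ladder. -/
def unlockedCount (ℓ : ℕ) (μ : YPartition) (k : ℕ) : ℕ :=
  ((μ.cells ∩ LadderPositions ℓ k) \ lockedCells ℓ μ).ncard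

/-- The diagram `S μ`: locked boxes stay put, and on each ladder the unlocked boxes are
moved into the lowest positions of that ladder not occupied by locked boxes. -/
def SCells (ℓ : ℕ) (μ : YPartition) : Set (ℕ × ℕ) :=
  lockedCells ℓ μ ∪
    {p | 1 ≤ p.1 ∧ 1 ≤ p.2 ∧ p ∉ lockedCells ℓ μ ∧
      ((LadderPositions ℓ (ladderIdx ℓ p) ∩ {q | p.1 < q.1}) \ lockedCells ℓ μ).ncard
        < unlockedCount ℓ μ (ladderIdx ℓ p)}

/-- `μ` is `ℓ`-regular: no part occurs `ℓ` or more times. -/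
def IsRegular (ℓ : ℕ) (μ : YPartition) : Prop :=
  ∀ a : ℕ, 1 ≤ a → 0 < μ.part (a + (ℓ - 1)) → μ.part (a + (ℓ - 1)) < μ.part a

/-- Removal of a single horizontal or vertical `ℓ`-rim hook. -/
def RemoveHV (ℓ : ℕ) (lam mu : YPartition) : Prop :=
  ∃ S : Set (ℕ × ℕ), IsRimHook ℓ lam S ∧ (HorizontalHook S ∨ VerticalHook S) ∧
    mu.cells = lam.cells \ S

/-- Condition (1): every removable `ℓ`-rim hook is horizontal or vertical. -/
def Cond1 (ℓ : ℕ) (μ : YPartition) : Prop :=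
  ∀ S : Set (ℕ × ℕ), IsRimHook ℓ μ S → HorizontalHook S ∨ VerticalHook S

/-- Condition (2): no vertical (resp. horizontal) `ℓ`-rim hook `R` of `μ` together with an
adjacent horizontal (resp. vertical) `ℓ`-rim hook `S` of `μ \ R` . -/
def Cond2 (ℓ : ℕ) (μ : YPartition) : Prop :=
  ¬ ∃ (R S : Set (ℕ × ℕ)) (ν : YPartition), IsRimHook ℓ μ R ∧ ν.cells = μ.cells \ R ∧
    IsRimHook ℓ ν S ∧ SetsAdjacent R S ∧
    ((VerticalHook R ∧ HorizontalHook S) ∨ (HorizontalHook R ∧ VerticalHook S))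

/-- A generalized `ℓ`-partition: conditions (1) and (2) hold after removing any sequence of
horizontal and vertical `ℓ`-rim hooks (including the empty sequence). -/
def IsGenLPartition (ℓ : ℕ) (lam : YPartition) : Prop :=
  ∀ mu : YPartition, Relation.ReflTransGen (RemoveHV ℓ) lam mu → Cond1 ℓ mu ∧ Cond2 ℓ mu

/-- The `t`-th row (from the top) of the bottom block of the decomposition
`(μ, r, s, ρ, σ)`: the number of values `v ∈ [1, s+1]` whose column block still reaches
row `t`; column block `v` consists of `σ_v·ℓ + (s+1−v)(ℓ−1)` rows of length `≥ v`. -/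
def bottomPart (ℓ s : ℕ) (σ : YPartition) (t : ℕ) : ℕ :=
  ((Finset.Icc 1 (s + 1)).filter fun v => t ≤ σ.part v * ℓ + (s + 1 - v) * (ℓ - 1)).card

/-- The `i`-th part of the partition corresponding to the data `(μ, r, s, ρ, σ)`. -/
def decompPart (ℓ : ℕ) (mu : YPartition) (r s : ℕ) (ρ σ : YPartition) (i : ℕ) : ℕ :=
  if i = 0 then 0
  else if i ≤ r + 1 then s + mu.part 1 + (r + 1 - i) * (ℓ - 1) + ρ.part i * ℓ
  else if i ≤ r + max mu.length 1 then s + mu.part (i - r)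
  else bottomPart ℓ s σ (i - (r + max mu.length 1))

/-- Admissibility of the decomposition data `(μ, r, s, ρ, σ)`. -/
def GoodData (ℓ : ℕ) (mu : YPartition) (r s : ℕ) (ρ σ : YPartition) : Prop :=
  IsCore ℓ mu ∧ mu.part 1 < mu.part 2 + (ℓ - 1) ∧ mu.colLen 1 < mu.colLen 2 + (ℓ - 1) ∧
  ρ.length ≤ r + 1 ∧ σ.length ≤ s + 1 ∧
  (mu.cells = ∅ → ρ.part (r + 1) = 0 ∨ σ.part (s + 1) = 0)

/-- `lam ≈ (μ, r, s, ρ, σ)`. -/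
def Decomposes (ℓ : ℕ) (lam mu : YPartition) (r s : ℕ) (ρ σ : YPartition) : Prop :=
  ∀ i : ℕ, lam.part i = decompPart ℓ mu r s ρ σ i

/-- Removal of a single `ℓ`-rim hook. -/
def RemoveHook (ℓ : ℕ) (lam mu : YPartition) : Prop :=
  ∃ S : Set (ℕ × ℕ), IsRimHook ℓ lam S ∧ mu.cells = lam.cells \ S

/-- `lam` has `ℓ`-core `nu` and `ℓ`-weight `w`. -/
def HasCoreAndWeight (ℓ : ℕ) (lam nu : YPartition) (w : ℕ) : Prop :=
  IsCore ℓ nu ∧ RelIter (RemoveHook ℓ) w lam nu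

/-- An L-partition. -/
def IsLPartition (ℓ : ℕ) (lam : YPartition) : Prop :=
  ¬ ∃ p : ℕ × ℕ, p ∈ lam.cells ∧ ℓ ∣ lam.hook p.1 p.2 ∧
    (lam.arm p.1 p.2 < (ℓ - 1) * lam.leg p.1 p.2 ∨
     lam.leg p.1 p.2 < (ℓ - 1) * lam.arm p.1 p.2)

end YPartition

/-! Let `p` be an addable and `q` a removable box of the same residue. If `p` lies above `q`,
the box in the row of `p` and the column of `q` has hook length `(p.2 - p.1) - (q.2 - q.1)`,
a multiple of `ℓ` because the residues agree, while the hook length of `q` is `1`. The JM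
condition then forces every hook length in the row of `p` to be a multiple of `ℓ`; since they
strictly decrease along the row they grow by at least `ℓ` per box, and this bounds how far right
`p` can be compared with `q`, which is exactly the ladder inequality. If `p` lies below `q` the
same argument runs in the column of `p`; equal rows are excluded by the residues, which differ
by `1` there. -/

lemma succ_mul_le_of_dvd_of_lt {ℓ k x : ℕ} (h : ℓ ∣ x) (hlt : k * ℓ < x) : (k + 1) * ℓ ≤ x := by
  obtain ⟨r, rfl⟩ := h
  have hkr : k < r := Nat.lt_of_mul_lt_mul_left (by rwa [mul_comm] at hlt)
  rw [mul_comm ℓ]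
  exact Nat.mul_le_mul_right ℓ hkr

lemma sub_add_one_mul_le_of_forall_dvd {ℓ m n : ℕ} {f : ℕ → ℕ} (hmn : m ≤ n)
    (hf : ∀ k, m ≤ k → k < n → f (k + 1) < f k) (hdvd : ∀ k, m ≤ k → k ≤ n → ℓ ∣ f k)
    (hpos : 0 < f n) : (n - m + 1) * ℓ ≤ f m := by
  obtain ⟨j, rfl⟩ := Nat.exists_eq_add_of_le hmn
  rw [Nat.add_sub_cancel_left]
  induction j generalizing m with
  | zero => simpa using Nat.le_of_dvd hpos (hdvd m le_rfl le_rfl)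
  | succ j ih =>
    have hnext : (j + 1) * ℓ ≤ f (m + 1) := by
      rw [show m + (j + 1) = m + 1 + j by omega] at hf hdvd hpos
      exact ih (by omega) (fun k hk hkn => hf k (by omega) hkn)
        (fun k hk hkn => hdvd k (by omega) hkn) hpos
    exact succ_mul_le_of_dvd_of_lt (hdvd m le_rfl (by omega))
      (hnext.trans_lt (hf m le_rfl (by omega)))

namespace YPartition

variable (μ : YPartition)

lemma mem_cells {a b : ℕ} : (a, b) ∈ μ.cells ↔ 1 ≤ a ∧ 1 ≤ b ∧ b ≤ μ.part a := Iff.rfl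

lemma finite_setOf_le_part {b : ℕ} (hb : 1 ≤ b) : {a : ℕ | 1 ≤ a ∧ b ≤ μ.part a}.Finite := by
  obtain ⟨N, hN⟩ := μ.eventually_zero
  refine (Set.finite_Icc 1 N).subset fun x ⟨hx1, hxb⟩ => ⟨hx1, ?_⟩
  by_contra h
  have := hN x (by omega)
  omega

lemma le_colLen_iff {a b : ℕ} (ha : 1 ≤ a) (hb : 1 ≤ b) : a ≤ μ.colLen b ↔ b ≤ μ.part a := by
  rw [colLen, Nat.card_coe_set_eq]
  constructor
  · intro h
    by_contra hba
    have hsub : {x : ℕ | 1 ≤ x ∧ b ≤ μ.part x} ⊆ Set.Icc 1 (a - 1) := by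
      rintro x ⟨hx1, hxb⟩
      refine ⟨hx1, ?_⟩
      by_contra hxa
      have := μ.antitone a x ha (by omega)
      omega
    have hle := Set.ncard_le_ncard hsub (Set.finite_Icc _ _)
    rw [← Finset.coe_Icc, Set.ncard_coe_finset, Nat.card_Icc] at hle
    omega
  · intro h
    have hsub : Set.Icc 1 a ⊆ {x : ℕ | 1 ≤ x ∧ b ≤ μ.part x} :=
      fun x ⟨hx1, hxa⟩ => ⟨hx1, h.trans (μ.antitone x a hx1 hxa)⟩
    have hle := Set.ncard_le_ncard hsub (μ.finite_setOf_le_part hb)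
    rw [← Finset.coe_Icc, Set.ncard_coe_finset, Nat.card_Icc] at hle
    omega

lemma colLen_lt_of_part_lt {a b : ℕ} (ha : 1 ≤ a) (hb : 1 ≤ b) (h : μ.part a < b) :
    μ.colLen b < a :=
  lt_of_not_ge fun hle => absurd ((μ.le_colLen_iff ha hb).1 hle) (by omega)

lemma colLen_eq_of_part {b c : ℕ} (hb : 1 ≤ b) (h1 : b ≤ μ.part c) (h2 : μ.part (c + 1) < b) :
    μ.colLen b = c := by
  have hc : 1 ≤ c := Nat.one_le_iff_ne_zero.2 fun hc => by
    have := μ.zero_at_zero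
    subst hc
    omega
  have := (μ.le_colLen_iff hc hb).2 h1
  have := μ.colLen_lt_of_part_lt (by omega) hb h2
  omega

lemma colLen_succ_le {b : ℕ} (hb : 1 ≤ b) : μ.colLen (b + 1) ≤ μ.colLen b := by
  rcases Nat.eq_zero_or_pos (μ.colLen (b + 1)) with h | h
  · omega
  · have := (μ.le_colLen_iff h (by omega)).1 le_rfl
    exact (μ.le_colLen_iff h hb).2 (by omega)

lemma hook_pos (a b : ℕ) : 0 < μ.hook a b := by
  unfold hook
  omega

lemma hook_cast {a b : ℕ} (h : (a, b) ∈ μ.cells) :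
    (μ.hook a b : ℤ) = μ.part a + μ.colLen b - a - b + 1 := by
  obtain ⟨ha, hb, hba⟩ := μ.mem_cells.1 h
  have := (μ.le_colLen_iff ha hb).2 hba
  unfold hook
  push_cast [Nat.cast_sub hba, Nat.cast_sub this]
  ring

lemma hook_succ_right_lt {a b : ℕ} (hb : 1 ≤ b) (h : (a, b + 1) ∈ μ.cells) :
    μ.hook a (b + 1) < μ.hook a b := by
  obtain ⟨ha, -, hba⟩ := μ.mem_cells.1 h
  have := (μ.le_colLen_iff ha (by omega)).2 hba
  have := μ.colLen_succ_le hb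
  unfold hook
  omega

lemma hook_succ_down_lt {a b : ℕ} (ha : 1 ≤ a) (h : (a + 1, b) ∈ μ.cells) : μ.hook (a + 1) b < μ.hook a b := by
  obtain ⟨-, hb, hba⟩ := μ.mem_cells.1 h
  have := (μ.le_colLen_iff (by omega) hb).2 hba
  have := μ.antitone a (a + 1) ha (by omega)
  unfold hook
  omega

lemma part_sub_add_one_mul_le_hook {ℓ a b : ℕ} (hrow : ∀ y, (a, y) ∈ μ.cells → ℓ ∣ μ.hook a y)
    (hab : (a, b) ∈ μ.cells) : (μ.part a - b + 1) * ℓ ≤ μ.hook a b := by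
  obtain ⟨ha, hb, hba⟩ := μ.mem_cells.1 hab
  exact sub_add_one_mul_le_of_forall_dvd hba
    (fun k hk hkn => μ.hook_succ_right_lt (by omega) (μ.mem_cells.2 ⟨ha, by omega, by omega⟩))
    (fun k hk hkn => hrow k (μ.mem_cells.2 ⟨ha, by omega, hkn⟩)) (μ.hook_pos _ _)

lemma colLen_sub_add_one_mul_le_hook {ℓ a b : ℕ} (hcol : ∀ x, (x, b) ∈ μ.cells → ℓ ∣ μ.hook x b)
    (hab : (a, b) ∈ μ.cells) : (μ.colLen b - a + 1) * ℓ ≤ μ.hook a b := by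
  obtain ⟨ha, hb, hba⟩ := μ.mem_cells.1 hab
  have hac := (μ.le_colLen_iff ha hb).2 hba
  exact sub_add_one_mul_le_of_forall_dvd hac
    (fun k hk hkn => μ.hook_succ_down_lt (by omega)
      (μ.mem_cells.2 ⟨by omega, hb, (μ.le_colLen_iff (by omega) hb).1 hkn⟩))
    (fun k hk hkn => hcol k (μ.mem_cells.2 ⟨by omega, hb, (μ.le_colLen_iff (by omega) hb).1 hkn⟩))
    (μ.hook_pos _ _)

variable {μ}

lemma Removable.colLen_eq {q : ℕ × ℕ} (hq : Removable μ q) : μ.colLen q.2 = q.1 :=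
  μ.colLen_eq_of_part (by have := hq.2.2; omega) hq.2.1.le hq.2.2

lemma Removable.hook_eq_one {q : ℕ × ℕ} (hq : Removable μ q) : μ.hook q.1 q.2 = 1 := by
  have := hq.colLen_eq
  have := hq.2.1
  unfold hook
  omega

lemma Addable.colLen_eq {p : ℕ × ℕ} (hp : Addable μ p) : μ.colLen p.2 = p.1 - 1 := by
  obtain ⟨hp1, hp2, hup⟩ := hp
  rcases hup with h | h
  · have := μ.colLen_lt_of_part_lt (b := p.2) hp1 (by omega) (by omega)
    omega
  · exact μ.colLen_eq_of_part (by omega) h (by rw [Nat.sub_add_cancel hp1]; omega)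

lemma IsJM.dvd_hook_of_mem_row {ℓ : ℕ} (hJM : IsJM ℓ μ) {a b x y : ℕ}
    (hab : (a, b) ∈ μ.cells) (hxb : (x, b) ∈ μ.cells) (hdvd : ℓ ∣ μ.hook a b)
    (hndvd : ¬ ℓ ∣ μ.hook x b) (hay : (a, y) ∈ μ.cells) : ℓ ∣ μ.hook a y :=
  by_contra fun hy => hJM ⟨a, b, y, x, hab, hay, hxb, hdvd, hy, hndvd⟩

lemma IsJM.dvd_hook_of_mem_col {ℓ : ℕ} (hJM : IsJM ℓ μ) {a b x y : ℕ}
    (hab : (a, b) ∈ μ.cells) (hay : (a, y) ∈ μ.cells) (hdvd : ℓ ∣ μ.hook a b)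
    (hndvd : ¬ ℓ ∣ μ.hook a y) (hxb : (x, b) ∈ μ.cells) : ℓ ∣ μ.hook x b :=
  by_contra fun hx => hJM ⟨a, b, y, x, hab, hay, hxb, hdvd, hndvd, hx⟩

lemma dvd_sub_of_res_eq {ℓ : ℕ} (hℓ : 0 < ℓ) {p q : ℕ × ℕ} (h : res ℓ p = res ℓ q) :
    (ℓ : ℤ) ∣ ((q.2 : ℤ) - q.1) - ((p.2 : ℤ) - p.1) := by
  have hℓ' : (ℓ : ℤ) ≠ 0 := by exact_mod_cast hℓ.ne'
  have := Int.emod_nonneg ((p.2 : ℤ) - p.1) hℓ'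
  have := Int.emod_nonneg ((q.2 : ℤ) - q.1) hℓ'
  unfold res at h
  have hmod : ((p.2 : ℤ) - p.1) % ℓ = ((q.2 : ℤ) - q.1) % ℓ := by omega
  exact Int.ModEq.dvd hmod

lemma ladderIdx_cast {ℓ : ℕ} (hℓ : 1 ≤ ℓ) {p : ℕ × ℕ} (hp : 1 ≤ p.2) :
    (ladderIdx ℓ p : ℤ) = p.1 + ((ℓ : ℤ) - 1) * (p.2 - 1) := by
  unfold ladderIdx
  push_cast [Nat.cast_sub hℓ, Nat.cast_sub hp]
  ring

lemma Removable.mem_cells {q : ℕ × ℕ} (hq : Removable μ q) : (q.1, q.2) ∈ μ.cells :=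
  ⟨hq.1, by have := hq.2.2; omega, hq.2.1.le⟩

lemma Removable.not_dvd_hook {ℓ : ℕ} (hℓ : 1 < ℓ) {q : ℕ × ℕ} (hq : Removable μ q) :
    ¬ ℓ ∣ μ.hook q.1 q.2 := by
  rw [hq.hook_eq_one, Nat.dvd_one]
  omega

lemma Addable.fst_ne_of_removable {ℓ : ℕ} (hℓ : 1 < ℓ) {p q : ℕ × ℕ} (hp : Addable μ p)
    (hq : Removable μ q) (hres : res ℓ p = res ℓ q) : p.1 ≠ q.1 := by
  intro hpq
  have hdvd := dvd_sub_of_res_eq (by omega) hres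
  have hp2 := hp.2.1
  have hq2 := hq.2.1
  rw [hpq] at hp2
  rw [show ((q.2 : ℤ) - q.1) - ((p.2 : ℤ) - p.1) = -1 by omega, Int.dvd_neg] at hdvd
  have := Int.le_of_dvd one_pos hdvd
  omega

lemma ladderLT_of_addable_of_removable_of_fst_lt {ℓ : ℕ} (hℓ : 1 < ℓ) (hJM : IsJM ℓ μ)
    {p q : ℕ × ℕ} (hp : Addable μ p) (hq : Removable μ q) (hres : res ℓ p = res ℓ q)
    (hpq : p.1 < q.1) : LadderLT ℓ p q := by
  obtain ⟨hp1, hp2, -⟩ := hp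
  have hq2 : 1 ≤ q.2 := by have := hq.2.2; omega
  have hcorner : (p.1, q.2) ∈ μ.cells :=
    ⟨hp1, hq2, hq.2.1.le.trans (μ.antitone _ _ hp1 hpq.le)⟩
  have hcorner_hook : (μ.hook p.1 q.2 : ℤ) = ((p.2 : ℤ) - p.1) - ((q.2 : ℤ) - q.1) := by
    rw [μ.hook_cast hcorner, hq.colLen_eq, hp2]
    push_cast
    ring
  have hdvd : ℓ ∣ μ.hook p.1 q.2 := by
    rw [← Int.natCast_dvd_natCast, hcorner_hook, ← dvd_neg, neg_sub]
    exact dvd_sub_of_res_eq (by omega) hres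
  have hbound := μ.part_sub_add_one_mul_le_hook
    (fun y hy => hJM.dvd_hook_of_mem_row hcorner hq.mem_cells hdvd (hq.not_dvd_hook hℓ) hy) hcorner
  have hle : ladderIdx ℓ p ≤ ladderIdx ℓ q := by
    zify [hcorner.2.2] at hbound ⊢
    rw [hcorner_hook] at hbound
    rw [ladderIdx_cast hℓ.le (by omega), ladderIdx_cast hℓ.le hq2]
    push_cast [hp2] at hbound ⊢
    linarith
  rcases hle.lt_or_eq with h | h
  exacts [Or.inl h, Or.inr ⟨h, hpq⟩]

lemma ladderIdx_lt_of_addable_of_removable_of_lt_fst {ℓ : ℕ} (hℓ : 2 < ℓ) (hJM : IsJM ℓ μ)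
    {p q : ℕ × ℕ} (hp : Addable μ p) (hq : Removable μ q) (hres : res ℓ p = res ℓ q)
    (hpq : q.1 < p.1) : ladderIdx ℓ p < ladderIdx ℓ q := by
  have hcol := hp.colLen_eq
  obtain ⟨hp1, hp2, hup⟩ := hp
  have hp2q : p.2 ≤ q.2 := by
    rcases hup with h | h
    · have := hq.1
      omega
    · rw [hq.2.1]
      exact h.trans (μ.antitone _ _ hq.1 (by omega))
  have hcorner : (q.1, p.2) ∈ μ.cells := ⟨hq.1, by omega, hq.2.1 ▸ hp2q⟩
  have hcorner_hook : (μ.hook q.1 p.2 : ℤ) = ((q.2 : ℤ) - q.1) - ((p.2 : ℤ) - p.1) := by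
    rw [μ.hook_cast hcorner, hcol, ← hq.2.1]
    push_cast [Nat.cast_sub hp1]
    ring
  have hdvd : ℓ ∣ μ.hook q.1 p.2 := by
    rw [← Int.natCast_dvd_natCast, hcorner_hook]
    exact dvd_sub_of_res_eq (by omega) hres
  have hbound := μ.colLen_sub_add_one_mul_le_hook
    (fun x hx => hJM.dvd_hook_of_mem_col hcorner hq.mem_cells hdvd (hq.not_dvd_hook (by omega)) hx)
    hcorner
  rw [hcol] at hbound
  zify [show q.1 ≤ p.1 - 1 by omega, hp1] at hbound ⊢
  rw [hcorner_hook] at hbound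
  rw [ladderIdx_cast (by omega) (by omega), ladderIdx_cast (by omega) (by omega)]
  have hℓ' : (3 : ℤ) ≤ ℓ := by exact_mod_cast hℓ
  have hpq' : (q.1 : ℤ) < p.1 := by exact_mod_cast hpq
  nlinarith

end YPartition

open YPartition

/-- if `λ` is an `(ℓ,0)`-JM partition, its ladder `i`-signature is already
reduced: every `+` (addable `i`-box) strictly precedes every `−` (removable `i`-box) in
the ladder reading order. -/
theorem statement12 (ℓ : ℕ) (hℓ : 2 < ℓ) (lam : YPartition) (hJM : IsJM ℓ lam) :
    ∀ i : ℕ, i < ℓ →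
      ∀ p ∈ AddableRes ℓ i lam, ∀ q ∈ RemovableRes ℓ i lam, LadderLT ℓ p q := by
  intro i _ p hp q hq
  have hres : res ℓ p = res ℓ q := hp.2.trans hq.2.symm
  rcases lt_trichotomy p.1 q.1 with hpq | hpq | hpq
  · exact ladderLT_of_addable_of_removable_of_fst_lt (by omega) hJM hp.1 hq.1 hres hpq
  · exact absurd hpq (hp.1.fst_ne_of_removable (by omega) hq.1 hres)
  · exact Or.inl (ladderIdx_lt_of_addable_of_removable_of_lt_fst hℓ hJM hp.1 hq.1 hres hpq)
end
end

section
/- Fix an integer ℓ > 2 and a residue i with 0 ≤ i < ℓ. If λ is an (ℓ,0)-JM partition, then \hat f_i^{k} λ is not an (ℓ,0)-JM partition for every k with 0 < k < \hatφ_i(λ) − 1, and \hat e_i^{k} λ is not an (ℓ,0)-JM partition for every k with 1 < k < \hatε_i(λ). -/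
noncomputable section

open YPartition

/-!
A removable `i`-box together with two addable `i`-boxes always produces a JM-violation when
`ℓ > 1`: if the addable boxes sit in rows `r₂ < r₁` and columns `c₂ > c₁`, the box `(r₂, c₁)`
has hook length `≡ -1 (mod ℓ)`, a removable box has hook length `1`, and the box where the row
of the removable box meets column `c₁` (if it lies above row `r₂`), or where row `r₂` meets its
column (if it lies below), has hook length equal to a difference of two contents of boxes of
residue `i`, hence divisible by `ℓ`.
Each application of `f̂_i` uses up at most one addable `i`-box and creates a removable one, and
each application of `ê_i` uses up one removable `i`-box and creates an addable one. Counting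
with `φ̂_i ≤ #addable` and `ε̂_i ≤ #removable` shows that the intermediate partitions of the two
chains have such a configuration.
-/

namespace YPartition

namespace RelIter

variable {α : Type} {r : α → α → Prop}

theorem le_add (f : α → ℕ) (hf : ∀ a b, r a b → f a ≤ f b + 1) :
    ∀ {k : ℕ} {a b : α}, RelIter r k a b → f a ≤ f b + k
  | 0, _, _, rfl => le_rfl
  | _ + 1, _, _, ⟨c, hac, hcb⟩ => by
    have := hf _ _ hac
    have := le_add f hf hcb
    omega

theorem add_le (f : α → ℕ) (hf : ∀ a b, r a b → f a + 1 ≤ f b) :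
    ∀ {k : ℕ} {a b : α}, RelIter r k a b → f a + k ≤ f b
  | 0, _, _, rfl => le_rfl
  | _ + 1, _, _, ⟨c, hac, hcb⟩ => by
    have := hf _ _ hac
    have := add_le f hf hcb
    omega

theorem exists_last : ∀ {k : ℕ} {a b : α}, k ≠ 0 → RelIter r k a b → ∃ c, r c b
  | 1, _, _, _, ⟨c, hac, rfl⟩ => ⟨_, hac⟩
  | _ + 2, _, _, _, ⟨_, _, hcb⟩ => exists_last (Nat.succ_ne_zero _) hcb

end RelIter

def content (p : ℕ × ℕ) : ℤ := (p.2 : ℤ) - p.1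

theorem modEq_of_res_eq {ℓ : ℕ} (hℓ : 0 < ℓ) {p q : ℕ × ℕ} (h : res ℓ p = res ℓ q) :
    content p ≡ content q [ZMOD ℓ] := by
  have hℓ' : (ℓ : ℤ) ≠ 0 := by exact_mod_cast hℓ.ne'
  have h' := congrArg (fun n : ℕ => (n : ℤ)) h
  simp only [res] at h'
  rwa [Int.toNat_of_nonneg (Int.emod_nonneg _ hℓ'),
    Int.toNat_of_nonneg (Int.emod_nonneg _ hℓ')] at h'

theorem add_one_not_modEq_self {ℓ : ℕ} (hℓ : 1 < ℓ) (x : ℤ) : ¬ x + 1 ≡ x [ZMOD ℓ] := by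
  intro h
  have h1 : (1 : ℤ) ≡ 0 [ZMOD ℓ] := Int.ModEq.add_left_cancel' x (by simpa using h)
  have := Int.eq_one_of_dvd_one (by positivity) (Int.modEq_zero_iff_dvd.mp h1)
  omega

theorem res_ne_of_content_eq_add_one {ℓ : ℕ} (hℓ : 1 < ℓ) {p q : ℕ × ℕ}
    (h : content q = content p + 1) : res ℓ q ≠ res ℓ p := fun hres =>
  add_one_not_modEq_self hℓ (content p) (h ▸ modEq_of_res_eq (by omega) hres)

section Shape

variable {μ lam mu : YPartition}

theorem mem_cells_iff {a b : ℕ} (ha : 1 ≤ a) (hb : 1 ≤ b) : (a, b) ∈ μ.cells ↔ b ≤ μ.part a := by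
  simp [cells, ha, hb]

theorem part_eq_of_mem_cells_iff {a n : ℕ} (ha : 1 ≤ a)
    (h : ∀ b, 1 ≤ b → ((a, b) ∈ μ.cells ↔ b ≤ n)) : μ.part a = n := by
  have h1 := (h (μ.part a + 1) (by omega)).symm.trans (mem_cells_iff ha (by omega))
  have h2 := (h (n + 1) (by omega)).symm.trans (mem_cells_iff ha (by omega))
  omega

theorem colLen_eq_of_le_of_lt {b r : ℕ} (hr : b ≤ μ.part r) (hr1 : μ.part (r + 1) < b) :
    μ.colLen b = r := by
  have hset : {a : ℕ | 1 ≤ a ∧ b ≤ μ.part a} = Set.Icc 1 r := by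
    ext a
    simp only [Set.mem_ofPred_eq, Set.mem_Icc]
    constructor
    · rintro ⟨ha, hba⟩
      refine ⟨ha, not_lt.mp fun hra => ?_⟩
      have := μ.antitone (r + 1) a (by omega) hra
      omega
    · rintro ⟨ha, har⟩
      exact ⟨ha, hr.trans (μ.antitone a r ha har)⟩
  simp [colLen, hset]

theorem Removable.colLen_eq_s14 {r c : ℕ} (h : Removable μ (r, c)) : μ.colLen c = r :=
  colLen_eq_of_le_of_lt h.2.1.le h.2.2

theorem Addable.colLen_eq_s14 {r c : ℕ} (h : Addable μ (r + 1, c)) (hr : 1 ≤ r) : μ.colLen c = r := by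
  obtain ⟨-, hc, hprev⟩ := h
  simp only [add_tsub_cancel_right] at hc hprev
  exact colLen_eq_of_le_of_lt (hprev.resolve_left (by omega)) (by omega)

theorem hook_cast_eq {a b : ℕ} (hb : b ≤ μ.part a) (ha : a ≤ μ.colLen b) :
    (μ.hook a b : ℤ) = μ.part a - b + μ.colLen b - a + 1 := by
  simp only [hook]
  push_cast [Nat.cast_sub hb, Nat.cast_sub ha]
  ring

theorem dvd_hook_iff {ℓ a b : ℕ} (hb : b ≤ μ.part a) (ha : a ≤ μ.colLen b) :
    ℓ ∣ μ.hook a b ↔ content (μ.colLen b, b) ≡ content (a, μ.part a) + 1 [ZMOD ℓ] := by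
  rw [← Int.natCast_dvd_natCast, Int.modEq_iff_dvd, hook_cast_eq hb ha]
  simp only [content]
  ring_nf

theorem Removable.not_addable {p : ℕ × ℕ} (h : Removable μ p) : ¬ Addable μ p :=
  fun h' => by have := h.2.1; have := h'.2.1; omega

theorem finite_setOf_addable (μ : YPartition) : {p | Addable μ p}.Finite := by
  obtain ⟨N, hN⟩ := μ.eventually_zero
  refine ((Set.finite_Icc 1 (N + 1)).image fun a => (a, μ.part a + 1)).subset ?_
  rintro ⟨a, b⟩ ⟨ha, hb, hprev⟩
  simp only at ha hb hprev
  subst hb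
  refine ⟨a, ⟨ha, not_lt.mp fun haN => ?_⟩, rfl⟩
  have := hN (a - 1) (by omega)
  omega

theorem finite_setOf_removable (μ : YPartition) : {p | Removable μ p}.Finite := by
  obtain ⟨N, hN⟩ := μ.eventually_zero
  refine ((Set.finite_Icc 1 N).image fun a => (a, μ.part a)).subset ?_
  rintro ⟨a, b⟩ ⟨ha, hb, hnext⟩
  simp only at ha hb hnext
  subst hb
  refine ⟨a, ⟨ha, not_lt.mp fun haN => ?_⟩, rfl⟩
  have := hN a (by omega)
  omega

theorem part_eq_update_of_cells_eq_insert {p : ℕ × ℕ} (hp : Addable lam p)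
    (h : mu.cells = insert p lam.cells) : mu.part = Function.update lam.part p.1 p.2 := by
  funext a
  rcases Nat.eq_zero_or_pos a with rfl | ha
  · rw [Function.update_of_ne (by have := hp.1; omega), mu.zero_at_zero, lam.zero_at_zero]
  refine part_eq_of_mem_cells_iff ha fun b hb => ?_
  rw [h, Set.mem_insert_iff, mem_cells_iff ha hb]
  rcases eq_or_ne a p.1 with rfl | hne
  · rw [Function.update_self, Prod.ext_iff]
    have := hp.2.1
    simp only [true_and]
    constructor <;> intro <;> omega
  · rw [Function.update_of_ne hne, Prod.ext_iff]
    simp [hne]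

theorem part_eq_update_of_cells_eq_diff {p : ℕ × ℕ} (hp : Removable lam p)
    (h : mu.cells = lam.cells \ {p}) : mu.part = Function.update lam.part p.1 (p.2 - 1) := by
  funext a
  rcases Nat.eq_zero_or_pos a with rfl | ha
  · rw [Function.update_of_ne (by have := hp.1; omega), mu.zero_at_zero, lam.zero_at_zero]
  refine part_eq_of_mem_cells_iff ha fun b hb => ?_
  rw [h, Set.mem_sdiff, Set.mem_singleton_iff, mem_cells_iff ha hb]
  rcases eq_or_ne a p.1 with rfl | hne
  · rw [Function.update_self, Prod.ext_iff]
    have := hp.2.1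
    simp only [true_and]
    constructor <;> intro <;> omega
  · rw [Function.update_of_ne hne, Prod.ext_iff]
    simp [hne]

end Shape

section Steps

variable {lam mu : YPartition} {p q : ℕ × ℕ}

theorem removable_of_cells_eq_insert (hp : Addable lam p) (h : mu.cells = insert p lam.cells) :
    Removable mu p := by
  have hpart := part_eq_update_of_cells_eq_insert hp h
  obtain ⟨hp1, hp2, -⟩ := hp
  have := lam.antitone p.1 (p.1 + 1) hp1 (by omega)
  refine ⟨hp1, by simp [hpart], ?_⟩
  rw [hpart, Function.update_of_ne (by omega)]
  omega

theorem addable_of_cells_eq_insert (hp : Addable lam p) (h : mu.cells = insert p lam.cells)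
    (hq : Addable lam q) (hne : q ≠ p) : Addable mu q := by
  have hpart := part_eq_update_of_cells_eq_insert hp h
  have hrow : q.1 ≠ p.1 := fun hr => hne (Prod.ext hr (by rw [hq.2.1, hp.2.1, hr]))
  obtain ⟨hq1, hq2, hq3⟩ := hq
  have := hp.2.1
  refine ⟨hq1, by rwa [hpart, Function.update_of_ne hrow], ?_⟩
  rw [hpart, Function.update_apply]
  split_ifs with hr
  · rw [hr] at hq3
    omega
  · exact hq3

theorem addable_of_cells_eq_diff (hp : Removable lam p) (h : mu.cells = lam.cells \ {p}) :
    Addable mu p := by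
  have hpart := part_eq_update_of_cells_eq_diff hp h
  obtain ⟨hp1, hp2, hp3⟩ := hp
  refine ⟨hp1, ?_, ?_⟩
  · rw [hpart, Function.update_self]
    omega
  · rcases eq_or_ne p.1 1 with h1 | h1
    · exact Or.inl h1
    · have := lam.antitone (p.1 - 1) p.1 (by omega) (by omega)
      rw [hpart, Function.update_of_ne (by omega)]
      omega

theorem removable_of_cells_eq_diff (hp : Removable lam p) (h : mu.cells = lam.cells \ {p})
    (hq : Removable lam q) (hne : q ≠ p) : Removable mu q := by
  have hpart := part_eq_update_of_cells_eq_diff hp h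
  have hrow : q.1 ≠ p.1 := fun hr => hne (Prod.ext hr (by rw [hq.2.1, hp.2.1, hr]))
  obtain ⟨hq1, hq2, hq3⟩ := hq
  have := hp.2.1
  refine ⟨hq1, by rwa [hpart, Function.update_of_ne hrow], ?_⟩
  rw [hpart, Function.update_apply]
  split_ifs with hr
  · rw [hr] at hq3
    omega
  · exact hq3

theorem addable_of_cells_eq_diff_of_ne (hp : Removable lam p) (h : mu.cells = lam.cells \ {p})
    (hq : Addable lam q) (hright : q ≠ (p.1, p.2 + 1)) (hbelow : q ≠ (p.1 + 1, p.2)) :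
    Addable mu q := by
  have hpart := part_eq_update_of_cells_eq_diff hp h
  have hrow : q.1 ≠ p.1 := fun hr => hright (Prod.ext hr (by rw [hq.2.1, hp.2.1, hr]))
  obtain ⟨hq1, hq2, hq3⟩ := hq
  have := hp.2.1
  refine ⟨hq1, by rwa [hpart, Function.update_of_ne hrow], ?_⟩
  rw [hpart, Function.update_apply]
  split_ifs with hr
  · refine hq3.imp_right fun hle => ?_
    have hq2' : q.2 ≠ p.2 := fun he => hbelow (Prod.ext (by omega) he)
    rw [hr] at hle
    omega
  · exact hq3

end Steps

section Crystal

variable {ℓ i : ℕ} {lam mu : YPartition}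

theorem finite_addableRes (ℓ i : ℕ) (μ : YPartition) : (AddableRes ℓ i μ).Finite :=
  (finite_setOf_addable μ).subset fun _ hp => hp.1

theorem finite_removableRes (ℓ i : ℕ) (μ : YPartition) : (RemovableRes ℓ i μ).Finite :=
  (finite_setOf_removable μ).subset fun _ hp => hp.1

theorem hatPhi_le_ncard_addableRes (ℓ i : ℕ) (μ : YPartition) :
    hatPhi ℓ i μ ≤ (AddableRes ℓ i μ).ncard :=
  Set.ncard_le_ncard (fun _ hp => hp.1) (finite_addableRes ℓ i μ)

theorem hatEps_le_ncard_removableRes (ℓ i : ℕ) (μ : YPartition) :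
    hatEps ℓ i μ ≤ (RemovableRes ℓ i μ).ncard :=
  Set.ncard_le_ncard (fun _ hp => hp.1) (finite_removableRes ℓ i μ)

theorem removableRes_nonempty_of_hatF (h : HatF ℓ i lam mu) : (RemovableRes ℓ i mu).Nonempty :=
  let ⟨p, hp, hcells⟩ := h
  ⟨p, removable_of_cells_eq_insert hp.1.1.1 hcells, hp.1.1.2⟩

theorem ncard_addableRes_le_of_hatF (h : HatF ℓ i lam mu) :
    (AddableRes ℓ i lam).ncard ≤ (AddableRes ℓ i mu).ncard + 1 := by
  obtain ⟨p, ⟨⟨hp, -⟩, -⟩, hcells⟩ := h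
  have hsub : AddableRes ℓ i lam \ {p} ⊆ AddableRes ℓ i mu := fun q ⟨hq, hne⟩ =>
    ⟨addable_of_cells_eq_insert hp.1 hcells hq.1 hne, hq.2⟩
  have := Set.ncard_le_ncard hsub (finite_addableRes ℓ i mu)
  have := Set.ncard_sdiff_singleton_add_one hp (finite_addableRes ℓ i lam)
  omega

theorem ncard_removableRes_le_of_hatE (h : HatE ℓ i lam mu) :
    (RemovableRes ℓ i lam).ncard ≤ (RemovableRes ℓ i mu).ncard + 1 := by
  obtain ⟨p, ⟨⟨hp, -⟩, -⟩, hcells⟩ := h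
  have hsub : RemovableRes ℓ i lam \ {p} ⊆ RemovableRes ℓ i mu := fun q ⟨hq, hne⟩ =>
    ⟨removable_of_cells_eq_diff hp.1 hcells hq.1 hne, hq.2⟩
  have := Set.ncard_le_ncard hsub (finite_removableRes ℓ i mu)
  have := Set.ncard_sdiff_singleton_add_one hp (finite_removableRes ℓ i lam)
  omega

/-- The positions right of and below a removable `i`-box have residues `i + 1` and `i - 1`,
so for `ℓ > 1` they are not addable `i`-boxes. -/
theorem ncard_addableRes_add_one_le_of_hatE (hℓ : 1 < ℓ) (h : HatE ℓ i lam mu) :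
    (AddableRes ℓ i lam).ncard + 1 ≤ (AddableRes ℓ i mu).ncard := by
  obtain ⟨p, ⟨⟨hp, -⟩, -⟩, hcells⟩ := h
  have hsub : insert p (AddableRes ℓ i lam) ⊆ AddableRes ℓ i mu := by
    refine Set.insert_subset ⟨addable_of_cells_eq_diff hp.1 hcells, hp.2⟩ fun q hq => ?_
    refine ⟨addable_of_cells_eq_diff_of_ne hp.1 hcells hq.1 ?_ ?_, hq.2⟩ <;> rintro rfl
    · exact res_ne_of_content_eq_add_one hℓ (by simp [content]; ring) (hq.2.trans hp.2.symm)
    · exact res_ne_of_content_eq_add_one hℓ (by simp [content]; ring) (hp.2.trans hq.2.symm)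
  have hp' : p ∉ AddableRes ℓ i lam := fun hq => hp.1.not_addable hq.1
  have := Set.ncard_le_ncard hsub (finite_addableRes ℓ i mu)
  rw [Set.ncard_insert_of_notMem hp' (finite_addableRes ℓ i lam)] at this
  exact this

end Crystal

theorem not_isJM_of_removableRes_of_addableRes {ℓ i : ℕ} (hℓ : 1 < ℓ) {μ : YPartition}
    {r c r₁ c₁ r₂ c₂ : ℕ} (hq : (r, c) ∈ RemovableRes ℓ i μ)
    (h₁ : (r₁ + 1, c₁) ∈ AddableRes ℓ i μ) (h₂ : (r₂, c₂) ∈ AddableRes ℓ i μ) (hr : r₂ ≤ r₁) :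
    ¬ IsJM ℓ μ := by
  have hmod₁ := modEq_of_res_eq (by omega) (h₁.2.trans hq.2.symm)
  have hmod₂ := modEq_of_res_eq (by omega) (h₂.2.trans hq.2.symm)
  have hcol := hq.1.colLen_eq_s14
  have hcol₁ := h₁.1.colLen_eq_s14 (by have := h₂.1.1; omega)
  obtain ⟨⟨hr1, hc, hcnext⟩, -⟩ := hq
  obtain ⟨⟨-, hc₁, hc₁prev⟩, -⟩ := h₁
  obtain ⟨⟨hr₂, hc₂, -⟩, -⟩ := h₂
  simp only [add_tsub_cancel_right, add_eq_right] at hr1 hc hcnext hc₁ hc₁prev hr₂ hc₂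
  have hcont₁ : content (r₁, c₁) = content (r₁ + 1, c₁) + 1 := by simp [content]; ring
  have hcont₂ : content (r₂, μ.part r₂) + 1 = content (r₂, c₂) := by simp [content, hc₂]; ring
  have hc₁le : c₁ ≤ μ.part r₂ := (hc₁prev.resolve_left (by omega)).trans (μ.antitone r₂ r₁ hr₂ hr)
  have hmem₂₁ : (r₂, c₁) ∈ μ.cells := (mem_cells_iff hr₂ (by omega)).mpr hc₁le
  have hmem : (r, c) ∈ μ.cells := (mem_cells_iff hr1 (by omega)).mpr hc.le
  have hnd₂₁ : ¬ ℓ ∣ μ.hook r₂ c₁ := by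
    rw [dvd_hook_iff hc₁le (by omega), hcol₁, hcont₁, hcont₂]
    exact fun h => add_one_not_modEq_self hℓ _ (h.trans (hmod₂.trans hmod₁.symm))
  have hnd : ¬ ℓ ∣ μ.hook r c := by
    rw [dvd_hook_iff hc.le (by omega), hcol, ← hc]
    exact fun h => add_one_not_modEq_self hℓ _ h.symm
  intro hJM
  rcases lt_trichotomy r r₂ with hlt | rfl | hgt
  · have hc₁c : c₁ ≤ μ.part r := hc₁le.trans (μ.antitone r r₂ hr1 hlt.le)
    have hd : ℓ ∣ μ.hook r c₁ := by
      rw [dvd_hook_iff hc₁c (by omega), hcol₁, hcont₁, ← hc]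
      exact Int.ModEq.add_right 1 hmod₁
    exact hJM ⟨r, c₁, c, r₂, (mem_cells_iff hr1 (by omega)).mpr hc₁c, hmem, hmem₂₁, hd, hnd, hnd₂₁⟩
  · have hcont : content (r, c₂) = content (r, c) + 1 := by simp [content, hc₂, hc]; ring
    exact add_one_not_modEq_self hℓ _ (hcont ▸ hmod₂)
  · have hcr₂ : c ≤ μ.part r₂ := hc.le.trans (μ.antitone r₂ r hr₂ hgt.le)
    have hd : ℓ ∣ μ.hook r₂ c := by
      rw [dvd_hook_iff hcr₂ (by omega), hcol, hcont₂]
      exact hmod₂.symm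
    exact hJM ⟨r₂, c, c₁, r, (mem_cells_iff hr₂ (by omega)).mpr hcr₂, hmem₂₁, hmem, hd, hnd₂₁, hnd⟩

theorem not_isJM_of_one_lt_ncard_addableRes {ℓ i : ℕ} (hℓ : 1 < ℓ) {μ : YPartition}
    (hq : (RemovableRes ℓ i μ).Nonempty) (hA : 1 < (AddableRes ℓ i μ).ncard) : ¬ IsJM ℓ μ := by
  obtain ⟨⟨r, c⟩, hq⟩ := hq
  obtain ⟨⟨a₁, b₁⟩, h₁, ⟨a₂, b₂⟩, h₂, hne⟩ := (Set.one_lt_ncard (finite_addableRes ℓ i μ)).mp hA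
  have hrow : a₁ ≠ a₂ := fun he => hne (Prod.ext he (by rw [h₁.1.2.1, h₂.1.2.1]; simp [he]))
  have key : ∀ {a₁ b₁ a₂ b₂}, (a₁, b₁) ∈ AddableRes ℓ i μ → (a₂, b₂) ∈ AddableRes ℓ i μ →
      a₂ < a₁ → ¬ IsJM ℓ μ := fun {a₁ _ _ _} h₁ h₂ hlt => by
    obtain ⟨r₁, rfl⟩ : ∃ r₁, a₁ = r₁ + 1 := ⟨a₁ - 1, by omega⟩
    exact not_isJM_of_removableRes_of_addableRes hℓ hq h₁ h₂ (by omega)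
  rcases hrow.lt_or_gt with hlt | hlt
  · exact key h₂ h₁ hlt
  · exact key h₁ h₂ hlt

end YPartition

theorem statement14_general (ℓ : ℕ) (hℓ : 2 < ℓ) (i : ℕ) (lam : YPartition) :
    (∀ k : ℕ, 0 < k → k < hatPhi ℓ i lam - 1 →
      ∀ mu : YPartition, RelIter (HatF ℓ i) k lam mu → ¬ IsJM ℓ mu) ∧
    (∀ k : ℕ, 1 < k → k < hatEps ℓ i lam →
      ∀ mu : YPartition, RelIter (HatE ℓ i) k lam mu → ¬ IsJM ℓ mu) := by
  have hℓ₁ : 1 < ℓ := by omega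
  refine ⟨fun k hk₀ hk mu hiter => ?_, fun k hk₁ hk mu hiter => ?_⟩
  · obtain ⟨_, hlast⟩ := hiter.exists_last hk₀.ne'
    have hA := hiter.le_add (fun μ => (AddableRes ℓ i μ).ncard) fun _ _ =>
      ncard_addableRes_le_of_hatF
    have := hatPhi_le_ncard_addableRes ℓ i lam
    exact not_isJM_of_one_lt_ncard_addableRes hℓ₁ (removableRes_nonempty_of_hatF hlast) (by omega)
  · have hR := hiter.le_add (fun μ => (RemovableRes ℓ i μ).ncard) fun _ _ =>
      ncard_removableRes_le_of_hatE
    have hA := hiter.add_le (fun μ => (AddableRes ℓ i μ).ncard) fun _ _ =>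
      ncard_addableRes_add_one_le_of_hatE hℓ₁
    have := hatEps_le_ncard_removableRes ℓ i lam
    have hne : (RemovableRes ℓ i mu).ncard ≠ 0 := by omega
    exact not_isJM_of_one_lt_ncard_addableRes hℓ₁ (Set.nonempty_of_ncard_ne_zero hne) (by omega)

/-- if `λ` is an `(ℓ,0)`-JM partition, then `f̂_i^k λ` is not an
`(ℓ,0)`-JM partition for `0 < k < φ̂_i(λ) − 1`, and `ê_i^k λ` is not an `(ℓ,0)`-JM
partition for `1 < k < ε̂_i(λ)`. -/
theorem statement14 (ℓ : ℕ) (hℓ : 2 < ℓ) (i : ℕ) (hi : i < ℓ) (lam : YPartition)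
    (hJM : IsJM ℓ lam) :
    (∀ k : ℕ, 0 < k → k < hatPhi ℓ i lam - 1 →
      ∀ mu : YPartition, RelIter (HatF ℓ i) k lam mu → ¬ IsJM ℓ mu) ∧
    (∀ k : ℕ, 1 < k → k < hatEps ℓ i lam →
      ∀ mu : YPartition, RelIter (HatE ℓ i) k lam mu → ¬ IsJM ℓ mu) :=
  statement14_general ℓ hℓ i lam
end
end

section
/- Fix an integer ℓ > 2. If λ is an ℓ-regular partition, then for every residue i with 0 ≤ i < ℓ there do not exist positions (a,b) and (c,d) on the same ladder with a < c such that (a,b) is an addable i-box of λ and (c,d) is a removable i-box of λ. -/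
noncomputable section

open YPartition

namespace YPartition

theorem Removable.part_pos {μ : YPartition} {q : ℕ × ℕ} (hq : Removable μ q) :
    0 < μ.part q.1 :=
  hq.2.1 ▸ (Nat.zero_le _).trans_lt hq.2.2

theorem IsRegular.part_add_le {ℓ : ℕ} {μ : YPartition} (hμ : IsRegular ℓ μ) {a : ℕ}
    (ha : 1 ≤ a) (j : ℕ) (hpos : 0 < μ.part (a + (ℓ - 1) * j)) :
    μ.part (a + (ℓ - 1) * j) + j ≤ μ.part a := by
  induction j with
  | zero => simp
  | succ j ih =>
    have hrow : a + (ℓ - 1) * j + (ℓ - 1) = a + (ℓ - 1) * (j + 1) := by ring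
    have hpos' : 0 < μ.part (a + (ℓ - 1) * j) :=
      hpos.trans_le (μ.antitone _ _ (by omega) (by omega))
    have hdrop := hμ (a + (ℓ - 1) * j) (by omega) (hrow ▸ hpos)
    rw [hrow] at hdrop
    have := ih hpos'
    omega

theorem SameLadder.fst_eq_add_mul {ℓ : ℕ} {p q : ℕ × ℕ} (h : SameLadder ℓ p q) (hℓ : 1 ≤ ℓ)
    (hlt : p.1 < q.1) : q.2 < p.2 ∧ q.1 = p.1 + (ℓ - 1) * (p.2 - q.2) := by
  unfold SameLadder at h
  have hcast : ((ℓ : ℤ) - 1) = ((ℓ - 1 : ℕ) : ℤ) := by omega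
  rw [hcast] at h
  have hsnd : q.2 < p.2 := by
    by_contra! hle
    have : ((ℓ - 1 : ℕ) : ℤ) * ((p.2 : ℤ) - q.2) ≤ 0 :=
      mul_nonpos_of_nonneg_of_nonpos (by positivity) (by omega)
    omega
  refine ⟨hsnd, ?_⟩
  zify [hsnd.le]
  linarith

/-- The boxes `(a, λ_a + 1)` and `(c, λ_c)` lie on the same ladder only if
`c - a = (ℓ - 1)(λ_a + 1 - λ_c)`, and then regularity forces
`λ_c ≤ λ_a - (λ_a + 1 - λ_c) = λ_c - 1`. -/
theorem IsRegular.not_addable_above_removable {ℓ : ℕ} (hℓ : 1 ≤ ℓ) {μ : YPartition}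
    (hμ : IsRegular ℓ μ) {p q : ℕ × ℕ} (hp : Addable μ p) (hq : Removable μ q)
    (hlad : SameLadder ℓ p q) (hlt : p.1 < q.1) : False := by
  obtain ⟨hsnd, hfst⟩ := hlad.fst_eq_add_mul hℓ hlt
  have hpos := hq.part_pos
  rw [hfst] at hpos
  have hdrop := hμ.part_add_le hp.1 (p.2 - q.2) hpos
  rw [← hfst, ← hq.2.1, hp.2.1] at hdrop
  omega

end YPartition

/-- if `λ` is `ℓ`-regular, then no ladder contains an addable `i`-box of `λ`
strictly above a removable `i`-box of `λ`. -/
theorem statement16 (ℓ : ℕ) (hℓ : 2 < ℓ) (lam : YPartition) (hreg : IsRegular ℓ lam) :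
    ∀ i : ℕ, i < ℓ →
      ¬ ∃ p q : ℕ × ℕ, p ∈ AddableRes ℓ i lam ∧ q ∈ RemovableRes ℓ i lam ∧
        SameLadder ℓ p q ∧ p.1 < q.1 := by
  rintro i - ⟨p, q, ⟨hp, -⟩, ⟨hq, -⟩, hlad, hlt⟩
  exact hreg.not_addable_above_removable (by omega) hp hq hlad hlt
end
end
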